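/- arXiv:2203.13633 — 2 statements merged into one kernel-verified Lean document; each statement's English description precedes it below -/
import Mathlib

section
/- Let p ≥ 1 be an integer and α a real number. The p×p stable spline matrix K defined (with 1-based indexing) by K(i,j) = α^{max(i,j)} has determinant det K = α^{p(p+1)/2} (1 − α)^{p−1}. -/
/-!
For any sequence `c`, subtracting the second row of `(c (max i j))ᵢⱼ` from the first leaves
`c 0 - c 1` as the only nonzero entry of the first row, and the complementary minor is the same
kind of matrix for the shifted sequence. Hence the determinant is
`(c 0 - c 1) ⋯ (c (p-2) - c (p-1)) · c (p-1)`; for `c k = α ^ (k + 1)` each difference is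
`α ^ (k + 1) (1 - α)`, and the powers of `α` add up to `1 + ⋯ + p = p (p + 1) / 2`.
-/

open Matrix

theorem Matrix.det_of_max {R : Type*} [CommRing R] (c : ℕ → R) (q : ℕ) :
    (of fun i j : Fin (q + 1) => c (max i.1 j.1)).det = (∏ i : Fin q, (c i - c (i + 1))) * c q := by
  induction q generalizing c with
  | zero => simp [det_unique]
  | succ q ih =>
    set A : Matrix (Fin (q + 2)) (Fin (q + 2)) R := of fun i j => c (max i.1 j.1)
    have hrow : A 0 + (-1 : R) • A 1 = Pi.single 0 (c 0 - c 1) := by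
      ext j
      rcases Fin.eq_zero_or_eq_succ j with rfl | ⟨j, rfl⟩
      · simp [A, sub_eq_add_neg]
      · simp [A, Fin.succ_ne_zero]
    have hminor : ((A.updateRow 0 (Pi.single 0 (c 0 - c 1))).submatrix Fin.succ Fin.succ) =
        of fun i j : Fin (q + 1) => c (max i.1 j.1 + 1) := by
      ext i j
      simp [A, Fin.succ_ne_zero, Nat.add_max_add_right]
    rw [← det_updateRow_add_smul_self A (Fin.succ_ne_zero 0).symm (-1), Fin.succ_zero_eq_one, hrow,
      det_succ_row_zero, Fin.sum_univ_succ]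
    simp [hminor, ih fun k => c (k + 1), Fin.succ_ne_zero, Fin.prod_univ_succ, mul_assoc]

theorem stable_spline_det_general (p : ℕ) (α : ℝ)
    (K : Matrix (Fin p) (Fin p) ℝ)
    (hK : ∀ i j : Fin p, K i j = α ^ (max (i.1 + 1) (j.1 + 1))) :
    K.det = α ^ (p * (p + 1) / 2) * (1 - α) ^ (p - 1) := by
  obtain _ | q := p
  · simp
  have hKmax : K = of fun i j : Fin (q + 1) => (fun k => α ^ (k + 1)) (max i.1 j.1) := by
    ext i j
    rw [hK, Nat.add_max_add_right, of_apply]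
  have hgauss : ∑ i ∈ Finset.range (q + 1), (i + 1) = (q + 1) * (q + 1 + 1) / 2 := by
    have h := Finset.sum_range_id (q + 2)
    rw [Finset.sum_range_succ'] at h
    simpa [mul_comm] using h
  have hstep : ∀ k : ℕ, α ^ (k + 1) - α ^ (k + 1 + 1) = α ^ (k + 1) * (1 - α) := fun k => by ring
  calc K.det = (∏ i : Fin q, (α ^ (i.1 + 1) * (1 - α))) * α ^ (q + 1) := by
        rw [hKmax, det_of_max (fun k => α ^ (k + 1))]
        simp_rw [hstep]
    _ = (∏ i : Fin (q + 1), α ^ (i.1 + 1)) * (1 - α) ^ q := by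
        simp only [Finset.prod_mul_distrib, Fin.prod_univ_castSucc, Fin.val_castSucc, Fin.val_last,
          Finset.prod_const, Finset.card_univ, Fintype.card_fin]
        ring
    _ = α ^ ((q + 1) * (q + 1 + 1) / 2) * (1 - α) ^ (q + 1 - 1) := by
        rw [Fin.prod_univ_eq_prod_range (fun i => α ^ (i + 1)), Finset.prod_pow_eq_pow_sum, hgauss,
          Nat.add_sub_cancel]

/-- The `p × p` stable spline matrix `K` with `K(i,j) = α ^ max(i,j)` (1-based indexing)
has determinant `α ^ (p(p+1)/2) * (1 - α) ^ (p - 1)`, for every real `α`. -/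
theorem stable_spline_det (p : ℕ) (hp : 1 ≤ p) (α : ℝ)
    (K : Matrix (Fin p) (Fin p) ℝ)
    (hK : ∀ i j : Fin p, K i j = α ^ (max (i.1 + 1) (j.1 + 1))) :
    K.det = α ^ (p * (p + 1) / 2) * (1 - α) ^ (p - 1) :=
  stable_spline_det_general p α K hK
end

section
/- Let p ≥ 1 be an integer and α a real number with 0 < α < 1. Then the p×p stable spline matrix K with entries K(i,j) = α^{max(i,j)} is symmetric positive definite (in particular invertible). -/
/-!
Dividing row and column `i` by `α ^ i` turns `α ^ max(i,j)` into `β ^ min(i,j)` with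
`β = α⁻¹ > 1`. A kernel `f (min i j)` with `f` strictly increasing and `f 0 > 0` factors as
`L * D * Lᵀ`, where `L` is the lower-triangular matrix of ones and `D` the diagonal of the
increments of `f`, all positive; so it is positive definite, and so is its congruent `K`.
-/

open Matrix Finset

def increment (f : ℕ → ℝ) : ℕ → ℝ
  | 0 => f 0
  | k + 1 => f (k + 1) - f k

lemma sum_range_succ_increment (f : ℕ → ℝ) (m : ℕ) :
    ∑ k ∈ range (m + 1), increment f k = f m := by
  induction m with
  | zero => simp [increment]
  | succ m ih => rw [sum_range_succ, ih, increment]; ring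

lemma increment_pos {f : ℕ → ℝ} (h0 : 0 < f 0) (hf : StrictMono f) (k : ℕ) :
    0 < increment f k := by
  cases k with
  | zero => exact h0
  | succ k => exact sub_pos.2 (hf k.lt_succ_self)

def lowerOnes (n : ℕ) : Matrix (Fin n) (Fin n) ℝ := of fun i k => if k ≤ i then 1 else 0

lemma det_lowerOnes (n : ℕ) : (lowerOnes n).det = 1 := by
  rw [det_of_isLowerTriangular _ fun i j (hij : i < j) => by simp [lowerOnes, not_le.2 hij]]
  simp [lowerOnes]

lemma of_min_eq_lowerOnes_mul (n : ℕ) (f : ℕ → ℝ) :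
    of (fun i j : Fin n => f (min i.1 j.1)) =
      lowerOnes n * diagonal (fun k : Fin n => increment f k) * (lowerOnes n)ᵀ := by
  ext i j
  have hmin : min i.1 j.1 < n := (min_le_left _ _).trans_lt i.2
  have hfilter : (range n).filter (· ≤ min i.1 j.1) = range (min i.1 j.1 + 1) := by
    ext k; simp only [mem_filter, mem_range]; omega
  simp only [of_apply, mul_apply, lowerOnes, diagonal_apply, transpose_apply, mul_ite, mul_one,
    mul_zero, ite_mul, zero_mul, sum_ite_eq', mem_univ, if_true]
  rw [← sum_range_succ_increment f, ← hfilter, sum_filter,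
    ← Fin.sum_univ_eq_sum_range (fun k => if k ≤ min i.1 j.1 then increment f k else 0)]
  refine sum_congr rfl fun k _ => ?_
  simp only [Fin.le_def, le_min_iff]
  split_ifs <;> simp_all

theorem posDef_of_min {n : ℕ} {f : ℕ → ℝ} (h0 : 0 < f 0) (hf : StrictMono f) :
    (of fun i j : Fin n => f (min i.1 j.1)).PosDef := by
  rw [of_min_eq_lowerOnes_mul]
  have hL : IsUnit (lowerOnes n) := by
    rw [isUnit_iff_isUnit_det, det_lowerOnes]; exact isUnit_one
  simpa using (PosDef.diagonal fun k : Fin n => increment_pos h0 hf k).mul_mul_conjTranspose_same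
    (vecMul_injective_of_isUnit hL)

lemma pow_max_eq_mul_inv_pow_min {G₀ : Type*} [CommGroupWithZero G₀] {a : G₀} (ha : a ≠ 0)
    (m n : ℕ) : a ^ max m n = a ^ m * a⁻¹ ^ min m n * a ^ n := by
  rw [inv_pow, mul_right_comm, ← pow_add, ← max_add_min m n, pow_add,
    mul_inv_cancel_right₀ (pow_ne_zero _ ha)]

theorem stable_spline_posDef_general (p : ℕ) (α : ℝ) (hα0 : 0 < α) (hα1 : α < 1)
    (K : Matrix (Fin p) (Fin p) ℝ)
    (hK : ∀ i j : Fin p, K i j = α ^ (max (i.1 + 1) (j.1 + 1))) :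
    K.IsSymm ∧ K.PosDef ∧ IsUnit K.det := by
  have hsymm : K.IsSymm := IsSymm.ext fun i j => by rw [hK, hK, max_comm]
  set v : Fin p → ℝ := fun i => α ^ (i.1 + 1)
  have hfactor :
      K = diagonal v * of (fun i j : Fin p => α⁻¹ ^ (min i.1 j.1 + 1)) * (diagonal v)ᴴ := by
    ext i j
    rw [hK, pow_max_eq_mul_inv_pow_min hα0.ne', Nat.add_min_add_right]
    simp [v]
  have hv : IsUnit (diagonal v) :=
    isUnit_diagonal.2 (Pi.isUnit_iff.2 fun i => (pow_pos hα0 _).ne'.isUnit)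
  have hmono : StrictMono fun m : ℕ => α⁻¹ ^ (m + 1) :=
    (pow_right_strictMono₀ ((one_lt_inv₀ hα0).2 hα1)).comp (strictMono_id.add_const 1)
  have hpos : K.PosDef := hfactor ▸
    (posDef_of_min (by positivity) hmono).mul_mul_conjTranspose_same (vecMul_injective_of_isUnit hv)
  exact ⟨hsymm, hpos, isUnit_iff_ne_zero.2 hpos.det_pos.ne'⟩

/-- For `0 < α < 1`, the `p × p` stable spline matrix `K` with entries
`K(i,j) = α ^ max(i,j)` (1-based indexing) is symmetric positive definite,
and in particular invertible. -/
theorem stable_spline_posDef (p : ℕ) (hp : 1 ≤ p) (α : ℝ) (hα0 : 0 < α) (hα1 : α < 1)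
    (K : Matrix (Fin p) (Fin p) ℝ)
    (hK : ∀ i j : Fin p, K i j = α ^ (max (i.1 + 1) (j.1 + 1))) :
    K.IsSymm ∧ K.PosDef ∧ IsUnit K.det :=
  stable_spline_posDef_general p α hα0 hα1 K hK
end
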